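/- For every 𝒯-category (X,a), every presheaf ψ ∈ X̂ and every 𝔵 ∈ TX one has ψ(𝔵) = ⟦T y_X(𝔵), ψ⟧, i.e. the 𝒯-module (y_X)_*: X ⇸∘ X̂ is given by the evaluation map; as a consequence, the Yoneda functor y_X: X → X̂ is fully faithful. -/

import Mathlib

universe u

namespace Paper

/-- A strict topological theory `𝒯 = (𝕋, V, ξ)`: a commutative unital quantale `V`
(a complete lattice with a commutative monoid structure whose multiplication preserves
suprema in each variable, with `⊥ < k`), a `Set`-monad `𝕋 = (T, e, m)` such that `T`
sends pullbacks to weak pullbacks and the naturality squares of `m` are weak pullbacks,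
and a `𝕋`-algebra structure `ξ : T V → V` for which `⊗` and `k` are `𝕋`-algebra
homomorphisms and `ξ_X := ξ ∘ T(-)` is a (monotone) natural transformation
`P_V → P_V T`. -/
structure TopTheory (V : Type u) [CompleteLattice V] (T : Type u → Type u) where
  tens : V → V → V
  unit : V
  tens_comm : ∀ u v : V, tens u v = tens v u
  tens_assoc : ∀ u v w : V, tens (tens u v) w = tens u (tens v w)
  unit_tens : ∀ v : V, tens unit v = v
  tens_sSup : ∀ (u : V) (S : Set V), tens u (sSup S) = ⨆ v ∈ S, tens u v
  bot_lt_unit : (⊥ : V) < unit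
  map : ∀ {X Y : Type u}, (X → Y) → T X → T Y
  map_id : ∀ {X : Type u}, map (id : X → X) = id
  map_comp : ∀ {X Y Z : Type u} (g : Y → Z) (f : X → Y) (𝔵 : T X),
    map (g ∘ f) 𝔵 = map g (map f 𝔵)
  e : ∀ {X : Type u}, X → T X
  m : ∀ {X : Type u}, T (T X) → T X
  e_nat : ∀ {X Y : Type u} (f : X → Y) (x : X), map f (e x) = e (f x)
  m_nat : ∀ {X Y : Type u} (f : X → Y) (𝔛 : T (T X)), map f (m 𝔛) = m (map (map f) 𝔛)
  m_e : ∀ {X : Type u} (𝔵 : T X), m (e 𝔵) = 𝔵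
  m_map_e : ∀ {X : Type u} (𝔵 : T X), m (map e 𝔵) = 𝔵
  m_assoc : ∀ {X : Type u} (𝔜 : T (T (T X))), m (m 𝔜) = m (map m 𝔜)
  /-- (BC): `T` sends pullbacks to weak pullbacks. -/
  map_bc : ∀ {X Y Z : Type u} (f : X → Z) (g : Y → Z) (𝔵 : T X) (𝔶 : T Y),
    map f 𝔵 = map g 𝔶 →
    ∃ 𝔴 : T {p : X × Y // f p.1 = g p.2},
      map (fun p => p.1.1) 𝔴 = 𝔵 ∧ map (fun p => p.1.2) 𝔴 = 𝔶
  /-- (BC): every naturality square of `m` is a weak pullback. -/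
  m_bc : ∀ {X Y : Type u} (f : X → Y) (𝔜 : T (T Y)) (𝔵 : T X),
    m 𝔜 = map f 𝔵 → ∃ 𝔛 : T (T X), map (map f) 𝔛 = 𝔜 ∧ m 𝔛 = 𝔵
  xi : T V → V
  xi_e : ∀ v : V, xi (e v) = v
  xi_m : ∀ 𝔙 : T (T V), xi (m 𝔙) = xi (map xi 𝔙)
  /-- `k : 1 → V` is a `𝕋`-algebra homomorphism. -/
  xi_unit : ∀ {X : Type u} (𝔵 : T X), xi (map (fun _ => unit) 𝔵) = unit
  /-- `⊗ : V × V → V` is a `𝕋`-algebra homomorphism. -/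
  xi_tens : ∀ 𝔴 : T (V × V),
    xi (map (fun p => tens p.1 p.2) 𝔴) = tens (xi (map Prod.fst 𝔴)) (xi (map Prod.snd 𝔴))
  /-- each component `ξ_X : V^X → V^{T X}` is monotone. -/
  xi_mono : ∀ {X : Type u} (φ φ' : X → V), (∀ x, φ x ≤ φ' x) →
    ∀ 𝔵 : T X, xi (map φ 𝔵) ≤ xi (map φ' 𝔵)
  /-- `ξ_X` is a natural transformation `P_V → P_V T`. -/
  xi_nat : ∀ {X Y : Type u} (f : X → Y) (φ : X → V) (𝔶 : T Y),
    (⨆ 𝔵 : {𝔵 : T X // map f 𝔵 = 𝔶}, xi (map φ 𝔵.1)) =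
      xi (map (fun y => ⨆ x : {x : X // f x = y}, φ x.1) 𝔶)

namespace TopTheory

variable {V : Type u} [CompleteLattice V] {T : Type u → Type u}

/-- The internal hom of the quantale: `u ⊗ (-) ⊣ hom (u, -)`. -/
def ihom (𝒯 : TopTheory V T) (u w : V) : V := sSup {z | 𝒯.tens u z ≤ w}

/-- The extension `T_ξ` of `T : Set → Set` to `V`-relations. -/
def Txi (𝒯 : TopTheory V T) {X Y : Type u} (r : X → Y → V) (𝔵 : T X) (𝔶 : T Y) : V :=
  ⨆ 𝔴 : {w : T (X × Y) // 𝒯.map Prod.fst w = 𝔵 ∧ 𝒯.map Prod.snd w = 𝔶},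
    𝒯.xi (𝒯.map (fun p => r p.1 p.2) 𝔴.1)

/-- Kleisli convolution `β ∘ α = β · T_ξ α · m_X°` of `𝒯`-relations
`α : X ⇸ Y` and `β : Y ⇸ Z`. -/
def kleisli (𝒯 : TopTheory V T) {X Y Z : Type u}
    (β : T Y → Z → V) (α : T X → Y → V) (𝔵 : T X) (z : Z) : V :=
  ⨆ 𝔛 : {𝔛 : T (T X) // 𝒯.m 𝔛 = 𝔵}, ⨆ 𝔶 : T Y, 𝒯.tens (𝒯.Txi α 𝔛.1 𝔶) (β 𝔶 z)

/-- The `𝒯`-relation `e_X° : X ⇸ X`. -/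
def unitRel (𝒯 : TopTheory V T) (X : Type u) (𝔵 : T X) (x : X) : V :=
  ⨆ _ : 𝔵 = 𝒯.e x, 𝒯.unit

/-- A `𝒯`-category structure on `X`: a `𝒯`-relation `a : X ⇸ X` with
`e_X° ≤ a` and `a ∘ a ≤ a`. -/
structure TCatStr (𝒯 : TopTheory V T) (X : Type u) where
  rel : T X → X → V
  le_refl : ∀ x : X, 𝒯.unit ≤ rel (𝒯.e x) x
  comp : ∀ (𝔵 : T X) (x : X), 𝒯.kleisli rel rel 𝔵 x ≤ rel 𝔵 x

/-- The `𝒯`-module conditions `φ ∘ a ≤ φ` and `b ∘ φ ≤ φ` for a `𝒯`-relation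
`φ : X ⇸ Y` between (structures underlying) `𝒯`-categories `(X,a)` and `(Y,b)`. -/
def IsTModRel (𝒯 : TopTheory V T) {X Y : Type u}
    (a : T X → X → V) (b : T Y → Y → V) (φ : T X → Y → V) : Prop :=
  (∀ 𝔵 y, 𝒯.kleisli φ a 𝔵 y ≤ φ 𝔵 y) ∧ (∀ 𝔵 y, 𝒯.kleisli b φ 𝔵 y ≤ φ 𝔵 y)

variable {𝒯 : TopTheory V T}

/-- `f_* = b · T f`. -/
def modStar {X Y : Type u} (b : 𝒯.TCatStr Y) (f : X → Y) (𝔵 : T X) (y : Y) : V :=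
  b.rel (𝒯.map f 𝔵) y

/-- `f^* = f° · b`. -/
def modCostar {X Y : Type u} (b : 𝒯.TCatStr Y) (f : X → Y) (𝔶 : T Y) (x : X) : V :=
  b.rel 𝔶 (f x)

/-- The extension `φ ⟜ ψ` of `φ : X ⇸∘ Y` along `ψ : X ⇸∘ Z`, given by
`(φ ⟜ ψ)(𝔷,y) = ⋀_{𝔵 ∈ T X} hom((T_ξ ψ · m_X°)(𝔵,𝔷), φ(𝔵,y))`. -/
def extend (𝒯 : TopTheory V T) {X Y Z : Type u}
    (φ : T X → Y → V) (ψ : T X → Z → V) (𝔷 : T Z) (y : Y) : V :=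
  ⨅ 𝔵 : T X, 𝒯.ihom (⨆ 𝔛 : {𝔛 : T (T X) // 𝒯.m 𝔛 = 𝔵}, 𝒯.Txi ψ 𝔛.1 𝔷) (φ 𝔵 y)

/-- A `𝒯`-functor `f : (X,a) → (Y,b)`. -/
def IsTFunctor {X Y : Type u} (a : 𝒯.TCatStr X) (b : 𝒯.TCatStr Y) (f : X → Y) : Prop :=
  ∀ (𝔵 : T X) (x : X), a.rel 𝔵 x ≤ b.rel (𝒯.map f 𝔵) (f x)

/-- A fully faithful `𝒯`-functor. -/
def FullyFaithful {X Y : Type u} (a : 𝒯.TCatStr X) (b : 𝒯.TCatStr Y) (f : X → Y) : Prop :=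
  ∀ (𝔵 : T X) (x : X), a.rel 𝔵 x = b.rel (𝒯.map f 𝔵) (f x)

/-- The order `f ≤ g ⟺ f^* ≤ g^*` on `𝒯`-functors `X → (Y,b)`. -/
def funLE {X Y : Type u} (b : 𝒯.TCatStr Y) (f g : X → Y) : Prop :=
  ∀ (𝔶 : T Y) (x : X), b.rel 𝔶 (f x) ≤ b.rel 𝔶 (g x)

/-- Equivalence `f ≅ g ⟺ f^* = g^*` of `𝒯`-functors `X → (Y,b)`. -/
def FunEquiv {X Y : Type u} (b : 𝒯.TCatStr Y) (f g : X → Y) : Prop :=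
  ∀ (𝔶 : T Y) (x : X), b.rel 𝔶 (f x) = b.rel 𝔶 (g x)

/-- `f ⊣ g`:  `1_X ≤ g·f` and `f·g ≤ 1_Y`. -/
def IsAdjunction {X Y : Type u} (a : 𝒯.TCatStr X) (b : 𝒯.TCatStr Y)
    (f : X → Y) (g : Y → X) : Prop :=
  (∀ (𝔵 : T X) (x : X), a.rel 𝔵 x ≤ a.rel 𝔵 (g (f x))) ∧
    (∀ (𝔶 : T Y) (y : Y), b.rel 𝔶 (f (g y)) ≤ b.rel 𝔶 y)

/-- A left adjoint `𝒯`-functor. -/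
def IsLeftAdjoint {X Y : Type u} (a : 𝒯.TCatStr X) (b : 𝒯.TCatStr Y) (f : X → Y) : Prop :=
  IsTFunctor a b f ∧ ∃ g : Y → X, IsTFunctor b a g ∧ IsAdjunction a b f g

/-- L-separatedness: equivalent `𝒯`-functors into `X` are equal. -/
def Separated {X : Type u} (a : 𝒯.TCatStr X) : Prop :=
  ∀ (A : Type u) (as : 𝒯.TCatStr A) (f g : A → X),
    IsTFunctor as a f → IsTFunctor as a g → FunEquiv a f g → f = g

/-- Injectivity with respect to fully faithful `𝒯`-functors. -/
def Injective {X : Type u} (a : 𝒯.TCatStr X) : Prop :=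
  ∀ (A B : Type u) (as : 𝒯.TCatStr A) (bs : 𝒯.TCatStr B) (f : A → X) (i : A → B),
    IsTFunctor as a f → IsTFunctor as bs i → FullyFaithful as bs i →
      ∃ g : B → X, IsTFunctor bs a g ∧ FunEquiv a (g ∘ i) f

/-- `g : Z → X` is the `ψ`-weighted colimit of `h : A → X`, i.e. `g_* = h_* ⟜ ψ`. -/
def IsColimit {X A Z : Type u} (a : 𝒯.TCatStr X) (h : A → X) (ψ : T A → Z → V)
    (g : Z → X) : Prop :=
  ∀ (𝔷 : T Z) (x : X), modStar a g 𝔷 x = 𝒯.extend (modStar a h) ψ 𝔷 x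

/-- Cocompleteness: every weighted diagram has a colimit. -/
def Cocomplete {X : Type u} (a : 𝒯.TCatStr X) : Prop :=
  ∀ (A Z : Type u) (as : 𝒯.TCatStr A) (cs : 𝒯.TCatStr Z) (h : A → X),
    IsTFunctor as a h → ∀ ψ : T A → Z → V, 𝒯.IsTModRel as.rel cs.rel ψ →
      ∃ g : Z → X, IsTFunctor cs a g ∧ IsColimit a h ψ g

/-- Cocontinuity: preservation of all weighted colimits. -/
def Cocontinuous {X Y : Type u} (a : 𝒯.TCatStr X) (b : 𝒯.TCatStr Y) (f : X → Y) : Prop :=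
  ∀ (A Z : Type u) (as : 𝒯.TCatStr A) (cs : 𝒯.TCatStr Z) (h : A → X)
    (ψ : T A → Z → V) (g : Z → X),
    IsTFunctor as a h → 𝒯.IsTModRel as.rel cs.rel ψ → IsTFunctor cs a g →
      IsColimit a h ψ g → IsColimit b (f ∘ h) ψ (f ∘ g)

/-- A presheaf on `(X,a)`: a `𝒯`-module `X ⇸∘ G`, where `G = (1, e_1°)`. -/
def IsPresheaf {X : Type u} (a : 𝒯.TCatStr X) (ψ : T X → V) : Prop :=
  𝒯.IsTModRel a.rel (𝒯.unitRel PUnit) (fun 𝔵 _ => ψ 𝔵)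

/-- The underlying set of the presheaf `𝒯`-category `X̂`. -/
def Hat {X : Type u} (a : 𝒯.TCatStr X) : Type u := {ψ : T X → V // IsPresheaf a ψ}

/-- The `𝒯`-category structure `⟦-,-⟧` of `V^{|X|}`. -/
def powRel (𝒯 : TopTheory V T) (X : Type u) (𝔭 : T (T X → V)) (ψ : T X → V) : V :=
  ⨅ 𝔮 : {q : T ((T X) × (T X → V)) // 𝒯.map Prod.snd q = 𝔭},
    𝒯.ihom (𝒯.xi (𝒯.map (fun p => p.2 p.1) 𝔮.1)) (ψ (𝒯.m (𝒯.map Prod.fst 𝔮.1)))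

/-- `hs` is the `𝒯`-category structure on `X̂` inherited from `V^{|X|}`. -/
def IsHatStr {X : Type u} (a : 𝒯.TCatStr X) (hs : 𝒯.TCatStr (Hat a)) : Prop :=
  ∀ (𝔭 : T (Hat a)) (ψ : Hat a), hs.rel 𝔭 ψ = 𝒯.powRel X (𝒯.map Subtype.val 𝔭) ψ.1

/-- `y` is the Yoneda functor `X → X̂`, `y x = a(-,x)`. -/
def IsYoneda {X : Type u} (a : 𝒯.TCatStr X) (y : X → Hat a) : Prop :=
  ∀ (x : X) (𝔵 : T X), (y x).1 𝔵 = a.rel 𝔵 x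

/-- The underlying map `ψ ↦ ψ ∘ f^*` of `f̂ : X̂ → Ŷ`. -/
def hatMapRel {X Y : Type u} (b : 𝒯.TCatStr Y) (f : X → Y) (ψ : T X → V) (𝔶 : T Y) : V :=
  𝒯.kleisli (fun 𝔵 (_ : PUnit.{u + 1}) => ψ 𝔵) (modCostar b f) 𝔶 PUnit.unit

/-- `fh` is the `𝒯`-functor `f̂ : X̂ → Ŷ`, with underlying map `ψ ↦ ψ ∘ f^*`. -/
def IsHatMap {X Y : Type u} (a : 𝒯.TCatStr X) (b : 𝒯.TCatStr Y) (f : X → Y)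
    (fh : Hat a → Hat b) : Prop :=
  ∀ (ψ : Hat a) (𝔶 : T Y), (fh ψ).1 𝔶 = hatMapRel b f ψ.1 𝔶

/-- An inhabited `𝒯`-module: `k ≤ ⋀_y ⋁_𝔵 φ(𝔵,y)`. -/
def InhabitedMod (𝒯 : TopTheory V T) {X Y : Type u} (φ : T X → Y → V) : Prop :=
  𝒯.unit ≤ ⨅ y : Y, ⨆ 𝔵 : T X, φ 𝔵 y

/-- A dense `𝒯`-functor: `f_*` is inhabited. -/
def Dense {X Y : Type u} (b : 𝒯.TCatStr Y) (f : X → Y) : Prop :=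
  𝒯.InhabitedMod (modStar b f)

/-- The underlying set of `X⁺ = {ψ ∈ X̂ ∣ ψ inhabited}`. -/
def Plus {X : Type u} (a : 𝒯.TCatStr X) : Type u :=
  {ψ : Hat a // 𝒯.InhabitedMod (fun 𝔵 (_ : PUnit.{u + 1}) => ψ.1 𝔵)}

/-- `ps` is the `𝒯`-category structure on `X⁺` inherited from `X̂`. -/
def IsPlusStr {X : Type u} (a : 𝒯.TCatStr X) (hs : 𝒯.TCatStr (Hat a))
    (ps : 𝒯.TCatStr (Plus a)) : Prop :=
  ∀ (𝔭 : T (Plus a)) (ψ : Plus a), ps.rel 𝔭 ψ = hs.rel (𝒯.map Subtype.val 𝔭) ψ.1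

/-- Inhabited-cocompleteness: all colimits with inhabited weights exist. -/
def ICocomplete {X : Type u} (a : 𝒯.TCatStr X) : Prop :=
  ∀ (A Z : Type u) (as : 𝒯.TCatStr A) (cs : 𝒯.TCatStr Z) (h : A → X),
    IsTFunctor as a h → ∀ ψ : T A → Z → V, 𝒯.IsTModRel as.rel cs.rel ψ →
      𝒯.InhabitedMod ψ → ∃ g : Z → X, IsTFunctor cs a g ∧ IsColimit a h ψ g

/-- Inhabited-cocontinuity: preservation of all colimits with inhabited weights. -/
def ICocontinuous {X Y : Type u} (a : 𝒯.TCatStr X) (b : 𝒯.TCatStr Y) (f : X → Y) : Prop :=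
  ∀ (A Z : Type u) (as : 𝒯.TCatStr A) (cs : 𝒯.TCatStr Z) (h : A → X)
    (ψ : T A → Z → V) (g : Z → X),
    IsTFunctor as a h → 𝒯.IsTModRel as.rel cs.rel ψ → 𝒯.InhabitedMod ψ →
      IsTFunctor cs a g → IsColimit a h ψ g → IsColimit b (f ∘ h) ψ (f ∘ g)


/-! The witness `T⟨e_X, y_X⟩(𝔵)` of `⟦T y_X(𝔵), ψ⟧` evaluates to at least `k`, which gives
`⟦T y_X(𝔵), ψ⟧ ≤ ψ(𝔵)`. Conversely, by (BC) every witness `𝔮` lifts to a witness of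
`T_ξ a (Tπ₁ 𝔮, 𝔵)`, so `ξ·Tev(𝔮) ⊗ ψ(𝔵) ≤ (ψ ∘ a)(m_X·Tπ₁ 𝔮) ≤ ψ(m_X·Tπ₁ 𝔮)` by the module
condition on `ψ`. -/

lemma tens_mono_right {u z z' : V} (h : z ≤ z') : 𝒯.tens u z ≤ 𝒯.tens u z' := by
  have hsup : sSup {z, z'} = z' := by rw [sSup_pair, sup_of_le_right h]
  calc 𝒯.tens u z ≤ ⨆ v ∈ ({z, z'} : Set V), 𝒯.tens u v := le_iSup₂_of_le z (by simp) le_rfl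
    _ = 𝒯.tens u z' := by rw [← 𝒯.tens_sSup, hsup]

lemma tens_mono_left {u u' z : V} (h : u ≤ u') : 𝒯.tens u z ≤ 𝒯.tens u' z := by
  rw [𝒯.tens_comm u z, 𝒯.tens_comm u' z]
  exact tens_mono_right h

lemma le_ihom_iff {u z w : V} : z ≤ 𝒯.ihom u w ↔ 𝒯.tens u z ≤ w := by
  refine ⟨fun h => ?_, fun h => le_sSup h⟩
  calc 𝒯.tens u z ≤ 𝒯.tens u (𝒯.ihom u w) := tens_mono_right h
    _ = ⨆ v ∈ {z | 𝒯.tens u z ≤ w}, 𝒯.tens u v := 𝒯.tens_sSup _ _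
    _ ≤ w := iSup₂_le fun _ hv => hv

lemma ihom_anti {u u' w : V} (h : u ≤ u') : 𝒯.ihom u' w ≤ 𝒯.ihom u w :=
  le_ihom_iff.2 (le_trans (tens_mono_left h) (le_ihom_iff.1 le_rfl))

lemma ihom_unit (w : V) : 𝒯.ihom 𝒯.unit w = w :=
  eq_of_forall_le_iff fun z => by rw [le_ihom_iff, 𝒯.unit_tens]

lemma le_Txi {X Y : Type u} (r : X → Y → V) (w : T (X × Y)) :
    𝒯.xi (𝒯.map (fun p => r p.1 p.2) w) ≤ 𝒯.Txi r (𝒯.map Prod.fst w) (𝒯.map Prod.snd w) :=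
  le_iSup_of_le ⟨w, rfl, rfl⟩ le_rfl

lemma le_kleisli {X Y Z : Type u} (β : T Y → Z → V) (α : T X → Y → V) (𝔛 : T (T X))
    (𝔶 : T Y) (z : Z) :
    𝒯.tens (𝒯.Txi α 𝔛 𝔶) (β 𝔶 z) ≤ 𝒯.kleisli β α (𝒯.m 𝔛) z :=
  le_iSup₂_of_le (f := fun (𝔛' : {𝔛' : T (T X) // 𝒯.m 𝔛' = 𝒯.m 𝔛}) 𝔶 =>
    𝒯.tens (𝒯.Txi α 𝔛'.1 𝔶) (β 𝔶 z)) ⟨𝔛, rfl⟩ 𝔶 le_rfl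

lemma xi_ev_le_Txi {A X : Type u} (r : A → X → V) (𝔵 : T X) (q : T (A × (A → V)))
    (hq : 𝒯.map Prod.snd q = 𝒯.map (fun x α => r α x) 𝔵) :
    𝒯.xi (𝒯.map (fun p => p.2 p.1) q) ≤ 𝒯.Txi r (𝒯.map Prod.fst q) 𝔵 := by
  obtain ⟨𝔴, rfl, rfl⟩ := 𝒯.map_bc Prod.snd (fun x α => r α x) q 𝔵 hq
  have hev : 𝒯.map (fun p => p.2 p.1) (𝒯.map (fun p => p.1.1) 𝔴)
      = 𝒯.map (fun p : A × X => r p.1 p.2) (𝒯.map (fun p => (p.1.1.1, p.1.2)) 𝔴) := by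
    simp only [← 𝒯.map_comp, Function.comp_def]
    congr 1
    funext p
    exact congrFun p.2 p.1.1.1
  rw [hev]
  convert le_Txi r _ using 2 <;> simp only [← 𝒯.map_comp] <;> rfl

lemma unit_le_xi_ev_yoneda {X : Type u} (a : 𝒯.TCatStr X) (𝔵 : T X) :
    𝒯.unit ≤ 𝒯.xi (𝒯.map (fun p : T X × (T X → V) => p.2 p.1)
      (𝒯.map (fun x => (𝒯.e x, fun 𝔶 => a.rel 𝔶 x)) 𝔵)) :=
  calc 𝒯.unit = 𝒯.xi (𝒯.map (fun _ => 𝒯.unit) 𝔵) := (𝒯.xi_unit 𝔵).symm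
    _ ≤ 𝒯.xi (𝒯.map (fun x => a.rel (𝒯.e x) x) 𝔵) := 𝒯.xi_mono _ _ a.le_refl 𝔵
    _ = _ := by rw [← 𝒯.map_comp]; rfl

theorem powRel_map_yoneda {X : Type u} (a : 𝒯.TCatStr X) (ψ : Hat a) (𝔵 : T X) :
    𝒯.powRel X (𝒯.map (fun x 𝔶 => a.rel 𝔶 x) 𝔵) ψ.1 = ψ.1 𝔵 := by
  apply le_antisymm
  · set q₀ := 𝒯.map (fun x => (𝒯.e x, fun 𝔶 => a.rel 𝔶 x)) 𝔵
    have hsnd : 𝒯.map Prod.snd q₀ = 𝒯.map (fun x 𝔶 => a.rel 𝔶 x) 𝔵 := by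
      rw [← 𝒯.map_comp]; rfl
    have hfst : 𝒯.m (𝒯.map Prod.fst q₀) = 𝔵 := by
      rw [← 𝒯.map_comp]; exact 𝒯.m_map_e 𝔵
    calc _ ≤ 𝒯.ihom (𝒯.xi (𝒯.map (fun p => p.2 p.1) q₀)) (ψ.1 (𝒯.m (𝒯.map Prod.fst q₀))) :=
          iInf_le_of_le ⟨q₀, hsnd⟩ le_rfl
      _ ≤ 𝒯.ihom 𝒯.unit (ψ.1 𝔵) := by rw [hfst]; exact ihom_anti (unit_le_xi_ev_yoneda a 𝔵)
      _ = ψ.1 𝔵 := ihom_unit _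
  · refine le_iInf fun ⟨q, hq⟩ => le_ihom_iff.2 ?_
    calc _ ≤ 𝒯.tens (𝒯.Txi a.rel (𝒯.map Prod.fst q) 𝔵) (ψ.1 𝔵) :=
          tens_mono_left (xi_ev_le_Txi a.rel 𝔵 q hq)
      _ ≤ 𝒯.kleisli (fun 𝔶 _ => ψ.1 𝔶) a.rel (𝒯.m (𝒯.map Prod.fst q)) PUnit.unit :=
          le_kleisli (fun 𝔶 (_ : PUnit) => ψ.1 𝔶) a.rel _ 𝔵 _
      _ ≤ ψ.1 (𝒯.m (𝒯.map Prod.fst q)) := ψ.2.1 _ _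

/-- Corollary 1.7, Yoneda lemma. For every `𝒯`-category `(X,a)`,
every `ψ ∈ X̂` and every `𝔵 ∈ T X` one has `ψ(𝔵) = ⟦T y_X(𝔵), ψ⟧`, i.e. `(y_X)_*` is
given by evaluation; consequently the Yoneda functor `y_X : X → X̂` is fully faithful. -/
theorem statement1 (𝒯 : TopTheory V T) {X : Type u} (a : 𝒯.TCatStr X)
    (hs : 𝒯.TCatStr (Hat a)) (hhs : IsHatStr a hs)
    (y : X → Hat a) (hy : IsYoneda a y) :
    (∀ (ψ : Hat a) (𝔵 : T X), ψ.1 𝔵 = hs.rel (𝒯.map y 𝔵) ψ) ∧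
      FullyFaithful a hs y := by
  have hyv : Subtype.val ∘ y = fun x 𝔶 => a.rel 𝔶 x := funext fun x => funext (hy x)
  have eval : ∀ (ψ : Hat a) (𝔵 : T X), ψ.1 𝔵 = hs.rel (𝒯.map y 𝔵) ψ := by
    intro ψ 𝔵
    have hmap : 𝒯.map (fun x 𝔶 => a.rel 𝔶 x) 𝔵 = 𝒯.map Subtype.val (𝒯.map y 𝔵) :=
      hyv ▸ 𝒯.map_comp Subtype.val y 𝔵
    exact (powRel_map_yoneda a ψ 𝔵).symm.trans
      ((congrArg (𝒯.powRel X · ψ.1) hmap).trans (hhs _ _).symm)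
  exact ⟨eval, fun 𝔵 x => by rw [← eval, hy]⟩

end TopTheory

end Paper
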